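/- For n ≥ 1, the number of maximal chains min = λ_0 < λ_1 < ... < λ_{n-1} = max in the partition lattice of {1,...,n} in which λ_i has exactly i+1 blocks for each i, equals n!·(n-1)!/2^{n-1}. -/

import Mathlib

/-- A partition of `{1,...,n}`, modeled as `Fin n`: a collection of nonempty,
pairwise disjoint subsets (blocks) covering `Fin n`. -/
structure FinSetPartition (n : ℕ) where
  blocks : Set (Set (Fin n))
  empty_not_mem : ∅ ∉ blocks
  existsUnique_mem : ∀ a : Fin n, ∃! B, B ∈ blocks ∧ a ∈ B

/-- The refinement order of the paper: `l ≤ l'` iff every block of `l` is a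
union of blocks of `l'` (i.e. `l'` refines `l`). -/
def FinSetPartition.le {n : ℕ} (l l' : FinSetPartition n) : Prop :=
  ∀ T ∈ l.blocks, ∃ S ⊆ l'.blocks, T = ⋃₀ S


namespace FinSetPartition
variable {n : ℕ}

theorem ext' {p q : FinSetPartition n} (h : p.blocks = q.blocks) : p = q := by
  cases p; cases q; simpa using h

theorem nonempty_of_mem {p : FinSetPartition n} {B} (hB : B ∈ p.blocks) : B.Nonempty := by
  rcases Set.eq_empty_or_nonempty B with h | h
  · exact absurd (h ▸ hB) p.empty_not_mem
  · exact h

theorem eq_of_mem {p : FinSetPartition n} {B C} (hB : B ∈ p.blocks) (hC : C ∈ p.blocks)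
    {a : Fin n} (haB : a ∈ B) (haC : a ∈ C) : B = C := by
  obtain ⟨D, -, hD⟩ := p.existsUnique_mem a
  rw [hD B ⟨hB, haB⟩, hD C ⟨hC, haC⟩]

theorem exists_block (p : FinSetPartition n) (a : Fin n) : ∃ B ∈ p.blocks, a ∈ B := by
  obtain ⟨B, hB, -⟩ := p.existsUnique_mem a
  exact ⟨B, hB⟩

instance : Finite (FinSetPartition n) :=
  Finite.of_injective (fun p => p.blocks) (fun p q h => ext' h)

theorem blocks_finite (p : FinSetPartition n) : p.blocks.Finite := Set.toFinite _

theorem subset_of_le {p q : FinSetPartition n} (h : p.le q) {B} (hB : B ∈ q.blocks) :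
    ∃ T ∈ p.blocks, B ⊆ T := by
  obtain ⟨a, ha⟩ := nonempty_of_mem hB
  obtain ⟨T, hT, haT⟩ := p.exists_block a
  obtain ⟨S, hS, hTS⟩ := h T hT
  rw [hTS] at haT
  obtain ⟨C, hCS, haC⟩ := haT
  refine ⟨T, hT, ?_⟩
  have : B = C := eq_of_mem hB (hS hCS) ha haC
  rw [this, hTS]
  exact Set.subset_sUnion_of_mem hCS

theorem le_of_forall_subset {p q : FinSetPartition n}
    (h : ∀ B ∈ q.blocks, ∃ T ∈ p.blocks, B ⊆ T) : p.le q := by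
  intro T hT
  refine ⟨{B | B ∈ q.blocks ∧ B ⊆ T}, fun B hB => hB.1, ?_⟩
  ext a
  constructor
  · intro haT
    obtain ⟨B, hB, haB⟩ := q.exists_block a
    obtain ⟨T', hT', hBT'⟩ := h B hB
    have : T' = T := eq_of_mem hT' hT (hBT' haB) haT
    exact ⟨B, ⟨hB, this ▸ hBT'⟩, haB⟩
  · rintro ⟨B, ⟨-, hBT⟩, haB⟩
    exact hBT haB

theorem le_refl (p : FinSetPartition n) : p.le p :=
  le_of_forall_subset fun B hB => ⟨B, hB, subset_rfl⟩

theorem le_trans {p q r : FinSetPartition n} (h1 : p.le q) (h2 : q.le r) : p.le r := by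
  refine le_of_forall_subset fun B hB => ?_
  obtain ⟨T, hT, hBT⟩ := subset_of_le h2 hB
  obtain ⟨T', hT', hTT'⟩ := subset_of_le h1 hT
  exact ⟨T', hT', hBT.trans hTT'⟩

/-- the unique block containing `a` -/
noncomputable def blk (p : FinSetPartition n) (a : Fin n) : Set (Fin n) :=
  (p.exists_block a).choose

theorem blk_mem (p : FinSetPartition n) (a : Fin n) : p.blk a ∈ p.blocks :=
  (p.exists_block a).choose_spec.1

theorem mem_blk (p : FinSetPartition n) (a : Fin n) : a ∈ p.blk a :=
  (p.exists_block a).choose_spec.2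

theorem blk_eq {p : FinSetPartition n} {B} (hB : B ∈ p.blocks) {a : Fin n} (haB : a ∈ B) :
    p.blk a = B :=
  eq_of_mem (p.blk_mem a) hB (p.mem_blk a) haB

theorem blocks_eq_univ_of_card_eq_one {p : FinSetPartition n} (h : Nat.card p.blocks = 1) :
    p.blocks = {Set.univ} := by
  obtain ⟨B, hB⟩ := Set.ncard_eq_one.mp (by rw [← Nat.card_coe_set_eq]; exact h)
  have hBu : B = Set.univ := by
    ext a
    simp only [Set.mem_univ, iff_true]
    obtain ⟨C, hC, haC⟩ := p.exists_block a
    rw [hB, Set.mem_singleton_iff] at hC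
    rwa [hC] at haC
  rw [hB, hBu]

def ptop (n : ℕ) : FinSetPartition n where
  blocks := {T | ∃ a : Fin n, T = {a}}
  empty_not_mem := by rintro ⟨a, ha⟩; exact (Set.singleton_ne_empty a) ha.symm
  existsUnique_mem := fun a => by
    refine ⟨{a}, ⟨⟨a, rfl⟩, rfl⟩, ?_⟩
    rintro B ⟨⟨b, rfl⟩, hab⟩
    rw [Set.mem_singleton_iff] at hab
    rw [hab]

theorem card_ptop_blocks : Nat.card (ptop n).blocks = n := by
  have h : (ptop n).blocks = Set.range (fun a : Fin n => ({a} : Set (Fin n))) := by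
    ext T; simp [ptop, Set.range, eq_comm]
  rw [h, Nat.card_range_of_injective (fun a b hab => by simpa using hab), Nat.card_eq_fintype_card,
    Fintype.card_fin]

variable {p : FinSetPartition n} {B C : Set (Fin n)}

theorem union_not_mem (hB : B ∈ p.blocks) (hC : C ∈ p.blocks) (hne : B ≠ C) :
    B ∪ C ∉ p.blocks := by
  intro h
  obtain ⟨b, hb⟩ := nonempty_of_mem hB
  obtain ⟨c, hc⟩ := nonempty_of_mem hC
  have h1 : B = B ∪ C := eq_of_mem hB h hb (Or.inl hb)
  have h2 : C = B ∪ C := eq_of_mem hC h hc (Or.inr hc)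
  exact hne (h1.trans h2.symm)

def merge (p : FinSetPartition n) (B C : Set (Fin n)) (hB : B ∈ p.blocks) (hC : C ∈ p.blocks)
    (hne : B ≠ C) : FinSetPartition n where
  blocks := insert (B ∪ C) (p.blocks \ {B, C})
  empty_not_mem := by
    rintro (h | h)
    · obtain ⟨b, hb⟩ := nonempty_of_mem hB
      exact absurd (h ▸ (Or.inl hb : b ∈ B ∪ C)) (Set.notMem_empty b)
    · exact p.empty_not_mem h.1
  existsUnique_mem := fun a => by
    by_cases hT : p.blk a = B ∨ p.blk a = C
    · refine ⟨B ∪ C, ⟨Set.mem_insert _ _, ?_⟩, ?_⟩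
      · rcases hT with h | h
        · exact Or.inl (h ▸ p.mem_blk a)
        · exact Or.inr (h ▸ p.mem_blk a)
      · rintro D ⟨hD | hD, haD⟩
        · exact hD
        · exfalso
          apply hD.2
          rw [← blk_eq hD.1 haD]
          rcases hT with h | h <;> simp [h]
    · push_neg at hT
      refine ⟨p.blk a, ⟨Set.mem_insert_of_mem _ ⟨p.blk_mem a, ?_⟩, p.mem_blk a⟩, ?_⟩
      · simp only [Set.mem_insert_iff, Set.mem_singleton_iff]
        push_neg
        exact hT
      · rintro D ⟨hD | hD, haD⟩
        · subst hD
          rcases haD with h | h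
          · exact absurd (blk_eq hB h) hT.1
          · exact absurd (blk_eq hC h) hT.2
        · exact (blk_eq hD.1 haD).symm

theorem merge_le (hB : B ∈ p.blocks) (hC : C ∈ p.blocks) (hne : B ≠ C) :
    (merge p B C hB hC hne).le p := by
  rintro T (hT | hT)
  · exact ⟨{B, C}, by rintro D (rfl | rfl); exacts [hB, hC], by rw [hT, Set.sUnion_pair]⟩
  · exact ⟨{T}, by simpa using hT.1, by simp⟩

theorem merge_blocks (hB : B ∈ p.blocks) (hC : C ∈ p.blocks) (hne : B ≠ C) :
    (merge p B C hB hC hne).blocks = insert (B ∪ C) (p.blocks \ {B, C}) := rfl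

theorem card_merge_blocks (hB : B ∈ p.blocks) (hC : C ∈ p.blocks) (hne : B ≠ C)
    {k : ℕ} (hk : Nat.card p.blocks = k + 2) :
    Nat.card (merge p B C hB hC hne).blocks = k + 1 := by
  have hfin := p.blocks_finite
  have hpair : ({B, C} : Set (Set (Fin n))) ⊆ p.blocks := by
    rintro D (rfl | rfl); exacts [hB, hC]
  rw [Nat.card_coe_set_eq] at hk ⊢
  rw [merge_blocks, Set.ncard_insert_of_notMem (fun h => union_not_mem hB hC hne h.1)
    (hfin.diff), Set.ncard_diff hpair, Set.ncard_pair hne, hk]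
  omega

theorem exists_merge {q : FinSetPartition n} (h : q.le p)
    (hcard : Nat.card q.blocks + 1 = Nat.card p.blocks) :
    ∃ (B C : Set (Fin n)) (hB : B ∈ p.blocks) (hC : C ∈ p.blocks) (hne : B ≠ C),
      q = merge p B C hB hC hne := by
  classical
  -- the superblock map
  have hsup : ∀ D : p.blocks, ∃ T : q.blocks, (D : Set (Fin n)) ⊆ T := by
    rintro ⟨D, hD⟩
    obtain ⟨T, hT, hDT⟩ := subset_of_le h hD
    exact ⟨⟨T, hT⟩, hDT⟩
  choose f hf using hsup
  have fiff : ∀ (D : p.blocks) (T : q.blocks), f D = T ↔ (D : Set (Fin n)) ⊆ T := by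
    intro D T
    constructor
    · rintro rfl; exact hf D
    · intro hsub
      obtain ⟨a, ha⟩ := nonempty_of_mem D.2
      exact Subtype.ext (eq_of_mem (f D).2 T.2 (hf D ha) (hsub ha))
  have fsurj : Function.Surjective f := by
    rintro ⟨T, hT⟩
    obtain ⟨a, ha⟩ := nonempty_of_mem hT
    refine ⟨⟨p.blk a, p.blk_mem a⟩, ?_⟩
    exact Subtype.ext (eq_of_mem (f ⟨p.blk a, p.blk_mem a⟩).2 hT (hf _ (p.mem_blk a)) ha)
  -- f is not injective
  have hni : ¬ Function.Injective f := fun hinj => by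
    have := Nat.card_le_card_of_injective f hinj
    omega
  simp only [Function.Injective, not_forall] at hni
  obtain ⟨B, C, hfBC, hBC⟩ := hni
  -- restricted map is bijective
  set g : {D : p.blocks // D ≠ C} → q.blocks := fun D => f D.1 with hg
  have gsurj : Function.Surjective g := by
    rintro T
    obtain ⟨D, hD⟩ := fsurj T
    by_cases hDC : D = C
    · refine ⟨⟨B, hBC⟩, ?_⟩
      show f B = T
      rw [hfBC, ← hDC]
      exact hD
    · exact ⟨⟨D, hDC⟩, hD⟩
  have hcard2 : Nat.card {D : p.blocks // D ≠ C} = Nat.card q.blocks := by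
    have e := (Equiv.sumCompl (fun D : p.blocks => D = C)).symm
    have h1 := Nat.card_congr e
    rw [Nat.card_sum] at h1
    have h2 : Nat.card {D : p.blocks // D = C} = 1 := by
      rw [Nat.card_eq_one_iff_unique]
      exact ⟨⟨fun x y => Subtype.ext (x.2.trans y.2.symm)⟩, ⟨⟨C, rfl⟩⟩⟩
    have h3 : Nat.card {a : p.blocks // ¬ a = C} = Nat.card {D : p.blocks // D ≠ C} := rfl
    omega
  have gbij : Function.Bijective g :=
    (Nat.bijective_iff_surjective_and_card g).mpr ⟨gsurj, hcard2⟩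
  -- T := f B = f C is the union B ∪ C
  have hT_eq : (↑(f B) : Set (Fin n)) = (↑B : Set (Fin n)) ∪ ↑C := by
    apply Set.Subset.antisymm
    · intro a ha
      have hblk : f ⟨p.blk a, p.blk_mem a⟩ = f B :=
        Subtype.ext (eq_of_mem (f ⟨p.blk a, p.blk_mem a⟩).2 (f B).2 (hf _ (p.mem_blk a)) ha)
      by_cases hc : (⟨p.blk a, p.blk_mem a⟩ : p.blocks) = C
      · right
        have : p.blk a = (C : Set (Fin n)) := congrArg Subtype.val hc
        exact this ▸ p.mem_blk a
      · left
        have : (⟨⟨p.blk a, p.blk_mem a⟩, hc⟩ : {D : p.blocks // D ≠ C}) = ⟨B, hBC⟩ :=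
          gbij.1 (by rw [hg]; simp only; rw [hblk, hfBC])
        have h5 := congrArg (fun x : {D : p.blocks // D ≠ C} => (x.1 : Set (Fin n))) this
        simp only at h5
        exact h5 ▸ p.mem_blk a
    · rintro a (ha | ha)
      · exact hf B ha
      · exact hfBC ▸ hf C ha
  -- singleton fibers
  have hL : ∀ D : p.blocks, D ≠ B → D ≠ C → (↑(f D) : Set (Fin n)) = ↑D := by
    intro D hDB hDC
    apply Set.Subset.antisymm
    · intro a ha
      have hblk : f ⟨p.blk a, p.blk_mem a⟩ = f D :=
        Subtype.ext (eq_of_mem (f ⟨p.blk a, p.blk_mem a⟩).2 (f D).2 (hf _ (p.mem_blk a)) ha)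
      by_cases hc : (⟨p.blk a, p.blk_mem a⟩ : p.blocks) = C
      · exfalso
        have h1 : f C = f D := by rw [← hc]; exact hblk
        have h2 : (⟨B, hBC⟩ : {D : p.blocks // D ≠ C}) = ⟨D, hDC⟩ :=
          gbij.1 (show f B = f D by rw [hfBC, h1])
        exact hDB (congrArg Subtype.val h2).symm
      · have h2 : (⟨⟨p.blk a, p.blk_mem a⟩, hc⟩ : {D : p.blocks // D ≠ C}) = ⟨D, hDC⟩ :=
          gbij.1 hblk
        have h5 := congrArg (fun x : {D : p.blocks // D ≠ C} => (x.1 : Set (Fin n))) h2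
        simp only at h5
        exact h5 ▸ p.mem_blk a
    · exact hf D
  refine ⟨↑B, ↑C, B.2, C.2, fun hc => hBC (Subtype.ext hc), ?_⟩
  apply ext'
  rw [merge_blocks]
  ext T'
  simp only [Set.mem_insert_iff, Set.mem_diff, Set.mem_singleton_iff]
  constructor
  · intro hT'
    by_cases ht : T' = ↑(f B)
    · left; rw [ht, hT_eq]
    · right
      obtain ⟨D, hD⟩ := gsurj ⟨T', hT'⟩
      have hval : (↑(f D.1) : Set (Fin n)) = T' := congrArg Subtype.val hD
      have hDB : D.1 ≠ B := by
        intro hdb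
        exact ht (hval ▸ (by rw [hdb]))
      have hLD := hL D.1 hDB D.2
      have hTD : T' = ↑D.1 := hval.symm.trans hLD
      rw [hTD]
      constructor
      · exact D.1.2
      · rintro (h | h)
        · exact hDB (Subtype.ext h)
        · exact D.2 (Subtype.ext h)
  · rintro (ht | ⟨htp, htne⟩)
    · rw [ht, ← hT_eq]; exact (f B).2
    · have hLD := hL ⟨T', htp⟩ (fun h => htne (Or.inl (congrArg Subtype.val h)))
        (fun h => htne (Or.inr (congrArg Subtype.val h)))
      have : T' = ↑(f ⟨T', htp⟩) := hLD.symm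
      rw [this]
      exact (f ⟨T', htp⟩).2

theorem merge_comm (hB : B ∈ p.blocks) (hC : C ∈ p.blocks) (hne : B ≠ C) :
    merge p B C hB hC hne = merge p C B hC hB (Ne.symm hne) := by
  apply ext'
  rw [merge_blocks, merge_blocks, Set.union_comm, Set.pair_comm]

theorem not_mem_merge_left (hB : B ∈ p.blocks) (hC : C ∈ p.blocks) (hne : B ≠ C) :
    B ∉ (merge p B C hB hC hne).blocks := by
  rintro (h | h)
  · obtain ⟨c, hc⟩ := nonempty_of_mem hC
    exact hne (eq_of_mem hB hC (h ▸ (Or.inr hc : c ∈ B ∪ C)) hc)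
  · exact h.2 (Or.inl rfl)

theorem not_mem_merge_right (hB : B ∈ p.blocks) (hC : C ∈ p.blocks) (hne : B ≠ C) :
    C ∉ (merge p B C hB hC hne).blocks := by
  rw [merge_comm]
  exact not_mem_merge_left hC hB (Ne.symm hne)

theorem mem_merge_of_mem (hB : B ∈ p.blocks) (hC : C ∈ p.blocks) (hne : B ≠ C)
    {D : Set (Fin n)} (hD : D ∈ p.blocks) (hDB : D ≠ B) (hDC : D ≠ C) :
    D ∈ (merge p B C hB hC hne).blocks :=
  Or.inr ⟨hD, by rintro (h | h); exacts [hDB h, hDC h]⟩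

open Classical in
theorem filter_merge (hB : B ∈ p.blocks) (hC : C ∈ p.blocks) (hne : B ≠ C) :
    (p.blocks_finite.toFinset).filter (fun D => D ∉ (merge p B C hB hC hne).blocks) =
      ({B, C} : Finset (Set (Fin n))) := by
  ext D
  simp only [Finset.mem_filter, Set.Finite.mem_toFinset, Finset.mem_insert,
    Finset.mem_singleton]
  constructor
  · rintro ⟨hDp, hDq⟩
    by_contra hcon
    push_neg at hcon
    exact hDq (mem_merge_of_mem hB hC hne hDp hcon.1 hcon.2)
  · rintro (rfl | rfl)
    · exact ⟨hB, not_mem_merge_left hB hC hne⟩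
    · exact ⟨hC, not_mem_merge_right hB hC hne⟩

theorem card_merges (p : FinSetPartition n) (m : ℕ) (hp : Nat.card p.blocks = m + 2) :
    Nat.card {q : FinSetPartition n // q.le p ∧ Nat.card q.blocks = m + 1} = (m + 2).choose 2 := by
  classical
  have hFbcard : (p.blocks_finite.toFinset).card = m + 2 := by
    rw [← Nat.card_eq_card_finite_toFinset p.blocks_finite]; exact hp
  have decomp : ∀ q : {q : FinSetPartition n // q.le p ∧ Nat.card q.blocks = m + 1},
      ∃ (B C : Set (Fin n)) (hB : B ∈ p.blocks) (hC : C ∈ p.blocks) (hne : B ≠ C),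
        q.1 = merge p B C hB hC hne := fun q =>
    exists_merge q.2.1 (by rw [q.2.2, hp])
  have hmem : ∀ (B C : Set (Fin n)), B ∈ p.blocks → C ∈ p.blocks → B ≠ C →
      ({B, C} : Finset (Set (Fin n))) ∈ (p.blocks_finite.toFinset).powersetCard 2 := by
    intro B C hB hC hne
    rw [Finset.mem_powersetCard]
    constructor
    · intro D hD
      rw [Set.Finite.mem_toFinset]
      rcases Finset.mem_insert.mp hD with rfl | hD
      · exact hB
      · rw [Finset.mem_singleton] at hD; exact hD ▸ hC
    · exact Finset.card_pair hne
  set F : {q : FinSetPartition n // q.le p ∧ Nat.card q.blocks = m + 1} →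
      {s : Finset (Set (Fin n)) // s ∈ (p.blocks_finite.toFinset).powersetCard 2} :=
    fun q => ⟨(p.blocks_finite.toFinset).filter (fun D => D ∉ q.1.blocks), by
      obtain ⟨B, C, hB, hC, hne, hq⟩ := decomp q
      rw [hq]
      rw [show ((p.blocks_finite.toFinset).filter
        (fun D => D ∉ (merge p B C hB hC hne).blocks)) = ({B, C} : Finset (Set (Fin n)))
        from filter_merge hB hC hne]
      exact hmem B C hB hC hne⟩ with hF
  have hbij : Function.Bijective F := by
    constructor
    · intro q1 q2 hq
      obtain ⟨B1, C1, hB1, hC1, hne1, he1⟩ := decomp q1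
      obtain ⟨B2, C2, hB2, hC2, hne2, he2⟩ := decomp q2
      have hv : ({B1, C1} : Finset (Set (Fin n))) = {B2, C2} := by
        have := congrArg Subtype.val hq
        rw [hF] at this
        simp only at this
        rw [he1, he2, filter_merge, filter_merge] at this
        exact this
      have hB2' : B2 = B1 ∨ B2 = C1 := by
        have : B2 ∈ ({B1, C1} : Finset (Set (Fin n))) := hv ▸ (by simp)
        simpa using this
      have hC2' : C2 = B1 ∨ C2 = C1 := by
        have : C2 ∈ ({B1, C1} : Finset (Set (Fin n))) := hv ▸ (by simp)
        simpa using this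
      apply Subtype.ext
      rw [he1, he2]
      rcases hB2' with rfl | rfl <;> rcases hC2' with rfl | rfl
      · exact absurd rfl hne2
      · rfl
      · exact merge_comm _ _ _
      · exact absurd rfl hne2
    · rintro ⟨s, hs⟩
      rw [Finset.mem_powersetCard] at hs
      obtain ⟨B, C, hne, rfl⟩ := Finset.card_eq_two.mp hs.2
      have hB : B ∈ p.blocks := by
        have := hs.1 (by simp : B ∈ ({B, C} : Finset (Set (Fin n))))
        rwa [Set.Finite.mem_toFinset] at this
      have hC : C ∈ p.blocks := by
        have := hs.1 (by simp : C ∈ ({B, C} : Finset (Set (Fin n))))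
        rwa [Set.Finite.mem_toFinset] at this
      refine ⟨⟨merge p B C hB hC hne, merge_le hB hC hne, card_merge_blocks hB hC hne hp⟩, ?_⟩
      apply Subtype.ext
      rw [hF]
      simp only
      exact filter_merge hB hC hne
  rw [Nat.card_eq_of_bijective F hbij, Nat.card_eq_finsetCard, Finset.card_powersetCard, hFbcard]

def chainsTo (n m : ℕ) : Type :=
  { d : Fin (m+1) → FinSetPartition n //
    (∀ j : Fin (m+1), Nat.card (d j).blocks = n - (j : ℕ)) ∧
    (∀ j j' : Fin (m+1), j < j' → (d j').le (d j)) ∧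
    (d 0).blocks = {T | ∃ a : Fin n, T = {a}} }

instance (n m : ℕ) : Finite (chainsTo n m) := by
  unfold chainsTo
  infer_instance

theorem card_chainsTo_zero (n : ℕ) : Nat.card (chainsTo n 0) = 1 := by
  rw [Nat.card_eq_one_iff_unique]
  constructor
  · constructor
    intro d e
    apply Subtype.ext
    funext j
    have hj : j = 0 := Fin.ext (by have := j.isLt; simp)
    subst hj
    exact ext' (d.2.2.2.trans e.2.2.2.symm)
  · refine ⟨⟨fun _ => ptop n, fun j => ?_, fun j j' h => ?_, rfl⟩⟩
    · have : (j : ℕ) = 0 := by omega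
      rw [this, card_ptop_blocks, Nat.sub_zero]
    · exact absurd h (by omega)

theorem card_chainsTo_succ (n m : ℕ) (hm : m + 2 ≤ n) :
    Nat.card (chainsTo n (m + 1)) =
      (n - m).choose 2 * Nat.card (chainsTo n m) := by
  classical
  set M : chainsTo n m → Type := fun d =>
    {q : FinSetPartition n // q.le (d.1 (Fin.last m)) ∧ Nat.card q.blocks = n - (m + 1)} with hM
  -- backward map
  have snoc_zero : ∀ (d : Fin (m+1) → FinSetPartition n) (q : FinSetPartition n),
      (Fin.snoc d q : Fin (m+2) → FinSetPartition n) 0 = d 0 := by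
    intro d q
    rw [show (0 : Fin (m+2)) = Fin.castSucc (0 : Fin (m+1)) from (Fin.castSucc_zero).symm,
      Fin.snoc_castSucc]
  set Ψ : (Σ d : chainsTo n m, M d) → chainsTo n (m+1) := fun x =>
    ⟨Fin.snoc x.1.1 x.2.1, by
      intro j
      refine Fin.lastCases ?_ ?_ j
      · rw [Fin.snoc_last, Fin.val_last]
        exact x.2.2.2
      · intro j0
        rw [Fin.snoc_castSucc, Fin.coe_castSucc]
        exact x.1.2.1 j0, by
      intro j j' hlt
      revert hlt
      revert j
      refine Fin.lastCases ?_ ?_ j'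
      · intro j hj
        obtain ⟨j0, rfl⟩ := Fin.exists_castSucc_eq.mpr (Fin.ne_last_of_lt hj)
        rw [Fin.snoc_last, Fin.snoc_castSucc]
        by_cases h0 : j0 = Fin.last m
        · rw [h0]; exact x.2.2.1
        · refine le_trans x.2.2.1 (x.1.2.2.1 j0 (Fin.last m) ?_)
          rw [Fin.lt_def, Fin.val_last]
          have h1 := j0.isLt
          have h2 : (j0 : ℕ) ≠ m := fun hc => h0 (Fin.ext (by rw [Fin.val_last]; exact hc))
          omega
      · intro j0' j hj
        have hne : j ≠ Fin.last (m+1) := by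
          intro h
          rw [h] at hj
          have := (Fin.castSucc_lt_last j0')
          exact absurd (hj.trans this) (lt_irrefl _)
        obtain ⟨j0, rfl⟩ := Fin.exists_castSucc_eq.mpr hne
        rw [Fin.snoc_castSucc, Fin.snoc_castSucc]
        exact x.1.2.2.1 j0 j0' (Fin.castSucc_lt_castSucc_iff.mp hj), by
      rw [snoc_zero]
      exact x.1.2.2.2⟩
  have hΨ : Function.Bijective Ψ := by
    constructor
    · rintro ⟨⟨d, hd⟩, ⟨q, hq⟩⟩ ⟨⟨d', hd'⟩, ⟨q', hq'⟩⟩ h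
      have hv := congrArg Subtype.val h
      simp only [Ψ] at hv
      have h1 : d = d' := by
        funext j
        have := congrFun hv (Fin.castSucc j)
        rwa [Fin.snoc_castSucc, Fin.snoc_castSucc] at this
      subst h1
      have h2 : q = q' := by
        have := congrFun hv (Fin.last (m+1))
        rwa [Fin.snoc_last, Fin.snoc_last] at this
      subst h2
      rfl
    · rintro ⟨e, he1, he2, he3⟩
      refine ⟨⟨⟨Fin.init e, fun j => ?_, fun j j' hlt => ?_, ?_⟩,
        ⟨e (Fin.last (m+1)), ?_, ?_⟩⟩, ?_⟩
      · rw [Fin.init]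
        have := he1 (Fin.castSucc j)
        rwa [Fin.coe_castSucc] at this
      · exact he2 _ _ (Fin.castSucc_lt_castSucc_iff.mpr hlt)
      · rw [Fin.init, Fin.castSucc_zero]
        exact he3
      · exact he2 _ _ (Fin.castSucc_lt_last (Fin.last m))
      · have := he1 (Fin.last (m+1))
        rwa [Fin.val_last] at this
      · apply Subtype.ext
        simp only [Ψ]
        exact Fin.snoc_init_self e
  letI : Fintype (chainsTo n m) := Fintype.ofFinite _
  letI : ∀ d : chainsTo n m, Fintype (M d) := fun d => Fintype.ofFinite _
  rw [← Nat.card_eq_of_bijective Ψ hΨ, Nat.card_eq_fintype_card, Fintype.card_sigma]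
  have hfib : ∀ d : chainsTo n m, Fintype.card (M d) = (n - m).choose 2 := by
    intro d
    rw [← Nat.card_eq_fintype_card, hM]
    simp only
    have hblocks : Nat.card (d.1 (Fin.last m)).blocks = (n - m - 2) + 2 := by
      have h := d.2.1 (Fin.last m)
      rw [Fin.val_last] at h
      omega
    rw [show n - (m + 1) = (n - m - 2) + 1 by omega]
    rw [card_merges _ _ hblocks]
    congr 1
    omega
  rw [Finset.sum_congr rfl (fun d _ => hfib d), Finset.sum_const, smul_eq_mul]
  have huniv : Nat.card (chainsTo n m) = (Finset.univ : Finset (chainsTo n m)).card := by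
    rw [Nat.card_eq_fintype_card, Finset.card_univ]
  rw [huniv, mul_comm]

theorem card_chainsTo_eq (n m : ℕ) (hm : m + 1 ≤ n) :
    Nat.card (chainsTo n m) = ∏ j ∈ Finset.range m, (n - j).choose 2 := by
  induction m with
  | zero => rw [card_chainsTo_zero]; simp
  | succ k ih =>
    rw [card_chainsTo_succ n k (by omega), ih (by omega), Finset.prod_range_succ, mul_comm]

theorem prod_fact (m : ℕ) :
    (∏ j ∈ Finset.range m, (m + 1 - j).choose 2) * 2 ^ m =
      (m + 1).factorial * m.factorial := by
  induction m with
  | zero => simp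
  | succ k ih =>
    have hsplit : (∏ j ∈ Finset.range (k + 1), (k + 2 - j).choose 2) =
        (∏ j ∈ Finset.range k, (k + 1 - j).choose 2) * (k + 2).choose 2 := by
      rw [Finset.prod_range_succ']
      congr 1
      exact Finset.prod_congr rfl (fun j _ => by congr 1; omega)
    have hchoose : (k + 2).choose 2 * 2 = (k + 2) * (k + 1) := by
      rw [Nat.choose_two_right, show (k + 2) - 1 = k + 1 by omega, mul_comm (k+2) (k+1)]
      exact Nat.div_mul_cancel (Nat.even_mul_succ_self (k+1)).two_dvd
    rw [show k + 1 + 1 = k + 2 by rfl] at *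
    rw [hsplit, pow_succ]
    calc (∏ j ∈ Finset.range k, (k + 1 - j).choose 2) * (k + 2).choose 2 * (2 ^ k * 2)
        = ((∏ j ∈ Finset.range k, (k + 1 - j).choose 2) * 2 ^ k) * ((k + 2).choose 2 * 2) := by
          ring
      _ = (k + 1).factorial * k.factorial * ((k + 2) * (k + 1)) := by rw [ih, hchoose]
      _ = (k + 2).factorial * (k + 1).factorial := by
          rw [Nat.factorial_succ (k + 1), Nat.factorial_succ k]
          ring


end FinSetPartition

open FinSetPartition

/-- For `n ≥ 1`, the number of maximal chains `min = λ_0 < λ_1 < ... < λ_{n-1} = max`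
in the partition lattice of `{1,...,n}` in which `λ_i` has exactly `i+1` blocks
equals `n!·(n-1)!/2^{n-1}`. -/
theorem partition_maximal_chain_count (n : ℕ) (hn : 1 ≤ n) :
    Nat.card {c : Fin n → FinSetPartition n //
      (∀ i : Fin n, Nat.card (c i).blocks = (i : ℕ) + 1) ∧
      (∀ i j : Fin n, i < j → (c i).le (c j) ∧ c i ≠ c j) ∧
      (c ⟨0, by omega⟩).blocks = {Set.univ} ∧
      (c ⟨n - 1, by omega⟩).blocks = {T | ∃ a : Fin n, T = {a}}} =
    n.factorial * (n - 1).factorial / 2 ^ (n - 1) := by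
  classical
  set S := {c : Fin n → FinSetPartition n //
      (∀ i : Fin n, Nat.card (c i).blocks = (i : ℕ) + 1) ∧
      (∀ i j : Fin n, i < j → (c i).le (c j) ∧ c i ≠ c j) ∧
      (c ⟨0, by omega⟩).blocks = {Set.univ} ∧
      (c ⟨n - 1, by omega⟩).blocks = {T | ∃ a : Fin n, T = {a}}} with hS
  set Φ : S → chainsTo n (n - 1) := fun c =>
    ⟨fun j => c.1 ⟨n - 1 - (j : ℕ), by omega⟩, by
      intro j
      have hj := j.isLt
      have := c.2.1 ⟨n - 1 - (j : ℕ), by omega⟩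
      simp only at this ⊢
      omega, by
      intro j j' hlt
      have hj' := j'.isLt
      exact (c.2.2.1 ⟨n - 1 - (j' : ℕ), by omega⟩ ⟨n - 1 - (j : ℕ), by omega⟩
        (by rw [Fin.mk_lt_mk]; rw [Fin.lt_def] at hlt; omega)).1, by
      simp only [Fin.val_zero, Nat.sub_zero]
      exact c.2.2.2.2⟩ with hΦ
  have hbij : Function.Bijective Φ := by
    rw [Function.bijective_iff_has_inverse]
    refine ⟨fun d => ⟨fun i => d.1 ⟨n - 1 - (i : ℕ), by omega⟩, ?_, ?_, ?_, ?_⟩, ?_, ?_⟩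
    · intro i
      have hi := i.isLt
      have := d.2.1 ⟨n - 1 - (i : ℕ), by omega⟩
      simp only at this ⊢
      omega
    · intro i j hlt
      have hj := j.isLt
      rw [Fin.lt_def] at hlt
      constructor
      · exact d.2.2.1 ⟨n - 1 - (j : ℕ), by omega⟩ ⟨n - 1 - (i : ℕ), by omega⟩
          (by rw [Fin.mk_lt_mk]; omega)
      · intro heq
        simp only at heq
        have h1 := d.2.1 ⟨n - 1 - (i : ℕ), by omega⟩
        have h2 := d.2.1 ⟨n - 1 - (j : ℕ), by omega⟩
        rw [heq] at h1
        simp only at h1 h2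
        omega
    · apply blocks_eq_univ_of_card_eq_one
      have := d.2.1 ⟨n - 1 - ((⟨0, by omega⟩ : Fin n) : ℕ), by omega⟩
      simp only at this
      rw [this]
      omega
    · have h0 : (⟨n - 1 - ((⟨n - 1, by omega⟩ : Fin n) : ℕ), by omega⟩ : Fin (n - 1 + 1)) =
          (0 : Fin (n - 1 + 1)) := Fin.ext (by simp)
      show (d.1 ⟨n - 1 - ((⟨n - 1, by omega⟩ : Fin n) : ℕ), by omega⟩).blocks = _
      rw [h0]
      exact d.2.2.2
    · intro c
      apply Subtype.ext
      funext i
      simp only [hΦ]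
      exact congrArg c.1 (Fin.ext (by have := i.isLt; simp; omega))
    · intro d
      apply Subtype.ext
      funext j
      simp only [hΦ]
      exact congrArg d.1 (Fin.ext (by have := j.isLt; simp; omega))
  rw [Nat.card_eq_of_bijective Φ hbij, card_chainsTo_eq n (n - 1) (by omega)]
  have hp := prod_fact (n - 1)
  rw [show n - 1 + 1 = n by omega] at hp
  exact (Nat.div_eq_of_eq_mul_left (pow_pos (by norm_num) _) (by rw [← hp]; try ring)).symm
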